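/- arXiv:1807.00811 — 2 statements merged into one kernel-verified Lean document; each statement's English description precedes it below -/
import Mathlib

section
/- A finite set E of d points in Z^2 is a minimizer of the edge perimeter among d-element subsets of Z^2 if and only if #Θ₂(E) = 2⌈2√d⌉. -/
/-!
Sort the boundary edges `(x, x + v)` of `E` by their direction `v`. For a horizontal `v`, every
nonempty row of `E` contains a point `x` with `x + v ∉ E` (its last point in direction `v`), and
exactly one if the rows of `E` are intervals; likewise for columns. So `#Θ₂(E) ≥ 2(p + q)`, where
`p` and `q` count the nonempty columns and rows, with equality for orthogonally convex sets. As
`E ⊆ p × q`, `4 #E ≤ 4pq ≤ (p + q)²`, i.e. `p + q ≥ ⌈2√#E⌉`. Conversely, an `a × b` rectangle with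
`c ≤ a` further cells on top of it has `p + q ≤ a + b + 1`, and for every `d > 0` the dimensions can
be chosen with `ab + c = d` and `(a + b)² < 4d`, i.e. `a + b + 1 ≤ ⌈2√d⌉`.
-/

open Finset Filter

/-- Adjacency in `ℤ²`: Euclidean distance one. -/
def adj2 (x y : ℤ × ℤ) : Prop :=
  (x.1 - y.1) ^ 2 + (x.2 - y.2) ^ 2 = 1

/-- Cardinality of the edge boundary `Θ₂(E)` in `ℤ²` (ordered pairs). -/
noncomputable def theta2 (E : Finset (ℤ × ℤ)) : ℕ :=
  Set.ncard {p : (ℤ × ℤ) × (ℤ × ℤ) | adj2 p.1 p.2 ∧ p.1 ∈ E ∧ p.2 ∉ E}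

/-- Number of ordered bonded pairs of `E ⊂ ℤ²`; this equals `2 b(E)`. -/
noncomputable def bondPairs2 (E : Finset (ℤ × ℤ)) : ℕ :=
  Set.ncard {p : (ℤ × ℤ) × (ℤ × ℤ) | adj2 p.1 p.2 ∧ p.1 ∈ E ∧ p.2 ∈ E}

/-- Number of unit bonds `b(E) = ½·#{(x,y) ∈ E×E : |x−y|=1}`. -/
noncomputable def bonds2 (E : Finset (ℤ × ℤ)) : ℕ := bondPairs2 E / 2

section LineEnds

variable {α β γ : Type*} [DecidableEq α] [DecidableEq β] [LinearOrder γ]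

lemma card_image_le_card_filter_notMem (E : Finset α) (t : α → α) (f : α → β) (g : α → γ)
    (hf : ∀ x, f (t x) = f x) (hg : ∀ x, g x < g (t x)) :
    #(E.image f) ≤ #(E.filter fun x => t x ∉ E) := by
  refine card_le_card_of_surjOn f fun y hy => ?_
  obtain ⟨x₀, hx₀, rfl⟩ := mem_image.mp hy
  obtain ⟨x, hx, hmax⟩ := (E.filter fun x => f x = f x₀).exists_max_image g ⟨x₀, by simp [hx₀]⟩
  rw [mem_filter] at hx
  refine ⟨x, mem_filter.mpr ⟨hx.1, fun htx => ?_⟩, hx.2⟩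
  exact (hg x).not_ge (hmax (t x) (mem_filter.mpr ⟨htx, (hf x).trans hx.2⟩))

lemma card_filter_notMem_le_card_image (E : Finset α) (t : α → α) (f : α → β) (g : α → γ)
    (hfg : Function.Injective fun x => (f x, g x))
    (hconv : ∀ x ∈ E, ∀ z ∈ E, f x = f z → g x < g z → t x ∈ E) :
    #(E.filter fun x => t x ∉ E) ≤ #(E.image f) := by
  refine card_le_card_of_injOn f (fun x hx => mem_image_of_mem f (mem_filter.mp hx).1) ?_
  intro x hx z hz hxz
  simp only [coe_filter, Set.mem_ofPred_eq] at hx hz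
  rcases lt_trichotomy (g x) (g z) with hlt | heq | hgt
  · exact absurd (hconv x hx.1 z hz.1 hxz hlt) hx.2
  · exact hfg (Prod.ext hxz heq)
  · exact absurd (hconv z hz.1 x hx.1 hxz.symm hgt) hz.2

lemma card_filter_add_neg_notMem [AddGroup α] (E : Finset α) (v : α) :
    #(E.filter fun x => x + -v ∉ E) = #(E.filter fun x => x + v ∉ E) := by
  suffices #(E.filter fun x => x + -v ∈ E) = #(E.filter fun x => x + v ∈ E) by
    have h₁ := card_filter_add_card_filter_not (s := E) (fun x => x + -v ∈ E)
    have h₂ := card_filter_add_card_filter_not (s := E) (fun x => x + v ∈ E)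
    omega
  refine card_nbij' (· + -v) (· + v) ?_ ?_ ?_ ?_ <;> intro x <;> simp_all

end LineEnds

lemma ceil_two_sqrt_le_iff (d n : ℕ) : ⌈2 * √(d : ℝ)⌉ ≤ n ↔ 4 * d ≤ n ^ 2 := by
  rw [Int.ceil_le, Int.cast_natCast,
    ← pow_le_pow_iff_left₀ (by positivity) (by positivity) two_ne_zero, mul_pow,
    Real.sq_sqrt (by positivity), ← @Nat.cast_le ℝ]
  push_cast
  norm_num

def unitVecs : Finset (ℤ × ℤ) := {(1, 0), (-1, 0), (0, 1), (0, -1)}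

lemma sq_add_sq_eq_one_iff {u v : ℤ} : u ^ 2 + v ^ 2 = 1 ↔ (u, v) ∈ unitVecs := by
  constructor
  · intro h
    have hu : |u| ≤ 1 := sq_le_one_iff_abs_le_one u |>.mp (by nlinarith [sq_nonneg v])
    have hv : |v| ≤ 1 := sq_le_one_iff_abs_le_one v |>.mp (by nlinarith [sq_nonneg u])
    rw [abs_le] at hu hv
    obtain ⟨hu₁, hu₂⟩ := hu
    obtain ⟨hv₁, hv₂⟩ := hv
    interval_cases u <;> interval_cases v <;> simp_all [unitVecs]
  · simp only [unitVecs, mem_insert, mem_singleton, Prod.ext_iff]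
    rintro (⟨rfl, rfl⟩ | ⟨rfl, rfl⟩ | ⟨rfl, rfl⟩ | ⟨rfl, rfl⟩) <;> norm_num

lemma adj2_iff_sub_mem_unitVecs {x y : ℤ × ℤ} : adj2 x y ↔ y - x ∈ unitVecs := by
  rw [adj2, ← sq_add_sq_eq_one_iff, Prod.fst_sub, Prod.snd_sub, ← neg_sub x.1, ← neg_sub x.2,
    neg_sq, neg_sq]

lemma theta2_eq_sum (E : Finset (ℤ × ℤ)) :
    theta2 E = ∑ v ∈ unitVecs, #(E.filter fun x => x + v ∉ E) := by
  have hset : {p : (ℤ × ℤ) × (ℤ × ℤ) | adj2 p.1 p.2 ∧ p.1 ∈ E ∧ p.2 ∉ E} =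
      ((E ×ˢ unitVecs).filter fun q => q.1 + q.2 ∉ E).image fun q => (q.1, q.1 + q.2) := by
    ext ⟨x, y⟩
    simp only [Set.mem_ofPred_eq, coe_image, coe_filter, mem_product, Set.mem_image,
      adj2_iff_sub_mem_unitVecs, Prod.mk.injEq]
    constructor
    · rintro ⟨hv, hx, hy⟩
      exact ⟨(x, y - x), ⟨⟨hx, hv⟩, by simpa using hy⟩, rfl, add_sub_cancel x y⟩
    · rintro ⟨⟨x, v⟩, ⟨⟨hx, hv⟩, hxv⟩, rfl, rfl⟩
      simpa [hx, hxv] using hv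
  have hinj : Function.Injective fun q : (ℤ × ℤ) × (ℤ × ℤ) => (q.1, q.1 + q.2) := by
    rintro ⟨x, v⟩ ⟨x', v'⟩ h
    simp only [Prod.mk.injEq] at h
    obtain ⟨rfl, h⟩ := h
    simpa using h
  rw [theta2, hset, Set.ncard_coe_finset, card_image_of_injective _ hinj, card_filter,
    sum_product_right]
  simp only [card_filter]

lemma theta2_eq_two_mul_add (E : Finset (ℤ × ℤ)) :
    theta2 E =
      2 * #(E.filter fun x => x + (1, 0) ∉ E) + 2 * #(E.filter fun x => x + (0, 1) ∉ E) := by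
  have h₁ := card_filter_add_neg_notMem E (1, 0)
  have h₂ := card_filter_add_neg_notMem E (0, 1)
  simp only [Prod.neg_mk, neg_zero] at h₁ h₂
  rw [theta2_eq_sum, unitVecs, sum_insert (by decide), sum_insert (by decide),
    sum_insert (by decide), sum_singleton, h₁, h₂]
  ring

lemma two_mul_card_image_add_le_theta2 (E : Finset (ℤ × ℤ)) :
    2 * (#(E.image Prod.fst) + #(E.image Prod.snd)) ≤ theta2 E := by
  have hrowEnds := card_image_le_card_filter_notMem E (· + (1, 0)) Prod.snd Prod.fst
    (by simp) (by simp)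
  have hcolEnds := card_image_le_card_filter_notMem E (· + (0, 1)) Prod.fst Prod.snd
    (by simp) (by simp)
  rw [theta2_eq_two_mul_add]
  omega

lemma theta2_le_of_orthoconvex (E : Finset (ℤ × ℤ))
    (hrow : ∀ x ∈ E, ∀ z ∈ E, x.2 = z.2 → x.1 < z.1 → x + (1, 0) ∈ E)
    (hcol : ∀ x ∈ E, ∀ z ∈ E, x.1 = z.1 → x.2 < z.2 → x + (0, 1) ∈ E) :
    theta2 E ≤ 2 * (#(E.image Prod.fst) + #(E.image Prod.snd)) := by
  have hrowEnds := card_filter_notMem_le_card_image E (· + (1, 0)) Prod.snd Prod.fst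
    (fun x z h => by simpa [Prod.ext_iff, and_comm] using h) hrow
  have hcolEnds := card_filter_notMem_le_card_image E (· + (0, 1)) Prod.fst Prod.snd
    (fun x z h => h) hcol
  rw [theta2_eq_two_mul_add]
  omega

noncomputable def quasiSquare (a b c : ℕ) : Finset (ℤ × ℤ) :=
  Ico (0 : ℤ) a ×ˢ Ico (0 : ℤ) b ∪ Ico (0 : ℤ) c ×ˢ {(b : ℤ)}

lemma card_quasiSquare (a b c : ℕ) : #(quasiSquare a b c) = a * b + c := by
  rw [quasiSquare, card_union_of_disjoint, card_product, card_product]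
  · simp
  · simp only [disjoint_left, mem_product, mem_Ico, mem_singleton]
    omega

lemma theta2_quasiSquare_le {a b c : ℕ} (hca : c ≤ a) :
    theta2 (quasiSquare a b c) ≤ 2 * (a + (b + 1)) := by
  have hcols : (quasiSquare a b c).image Prod.fst ⊆ Ico 0 a := by
    intro x
    simp only [quasiSquare, mem_image, mem_union, mem_product, mem_Ico, mem_singleton]
    omega
  have hrows : (quasiSquare a b c).image Prod.snd ⊆ Ico 0 (b + 1 : ℕ) := by
    intro y
    simp only [quasiSquare, mem_image, mem_union, mem_product, mem_Ico, mem_singleton]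
    omega
  refine (theta2_le_of_orthoconvex _ ?_ ?_).trans ?_
  · simp only [quasiSquare, mem_union, mem_product, mem_Ico, mem_singleton, Prod.fst_add,
      Prod.snd_add]
    omega
  · simp only [quasiSquare, mem_union, mem_product, mem_Ico, mem_singleton, Prod.fst_add,
      Prod.snd_add]
    omega
  · have := card_le_card hcols
    have := card_le_card hrows
    simp only [Int.card_Ico] at *
    omega

lemma exists_quasiSquare_dims {d : ℕ} (hd : 0 < d) :
    ∃ a b c : ℕ, c ≤ a ∧ a * b + c = d ∧ (a + b) ^ 2 < 4 * d := by
  obtain ⟨t, ht₁, ht₂⟩ : ∃ t, t ^ 2 < d ∧ d ≤ (t + 1) ^ 2 :=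
    ⟨Nat.sqrt (d - 1), by have := Nat.sqrt_le' (d - 1); omega,
      by have := Nat.lt_succ_sqrt' (d - 1); rw [Nat.succ_eq_add_one] at this; omega⟩
  by_cases hd' : d ≤ t ^ 2 + t
  · exact ⟨t, t, d - t ^ 2, by omega, by rw [← sq]; omega, by nlinarith⟩
  · refine ⟨t + 1, t, d - t ^ 2 - t, ?_, by rw [add_mul, ← sq]; omega, by nlinarith⟩
    rw [add_sq] at ht₂
    omega

lemma two_mul_ceil_two_sqrt_le_theta2 (E : Finset (ℤ × ℤ)) :
    2 * ⌈2 * √(#E : ℝ)⌉ ≤ (theta2 E : ℤ) := by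
  set p := #(E.image Prod.fst)
  set q := #(E.image Prod.snd)
  have hpq : #E ≤ p * q := by
    rw [← card_product]
    exact card_le_card fun x hx =>
      mem_product.mpr ⟨mem_image_of_mem _ hx, mem_image_of_mem _ hx⟩
  have hceil : ⌈2 * √(#E : ℝ)⌉ ≤ (p + q : ℕ) :=
    (ceil_two_sqrt_le_iff _ _).mpr (by nlinarith [four_mul_le_sq_add p q])
  have := two_mul_card_image_add_le_theta2 E
  push_cast at hceil
  omega

lemma exists_card_eq_theta2_le (d : ℕ) :
    ∃ F : Finset (ℤ × ℤ), #F = d ∧ (theta2 F : ℤ) ≤ 2 * ⌈2 * √(d : ℝ)⌉ := by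
  rcases d.eq_zero_or_pos with rfl | hd
  · exact ⟨∅, rfl, by simp [theta2]⟩
  obtain ⟨a, b, c, hca, rfl, hsq⟩ := exists_quasiSquare_dims hd
  refine ⟨quasiSquare a b c, card_quasiSquare a b c, ?_⟩
  have hceil : ((a + b : ℕ) : ℤ) < ⌈2 * √((a * b + c : ℕ) : ℝ)⌉ :=
    not_le.mp fun h => (ceil_two_sqrt_le_iff _ _).mp h |>.not_gt hsq
  have := theta2_quasiSquare_le (b := b) hca
  push_cast at hceil ⊢
  omega

/-- a `d`-element `E ⊂ ℤ²` minimizes the edge perimeter iff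
`#Θ₂(E) = 2⌈2√d⌉`. -/
theorem minimizer2_iff_perimeter (d : ℕ) (E : Finset (ℤ × ℤ)) (hE : E.card = d) :
    (∀ F : Finset (ℤ × ℤ), F.card = d → theta2 E ≤ theta2 F) ↔
      (theta2 E : ℤ) = 2 * ⌈(2 * Real.sqrt d)⌉ := by
  have hlower : ∀ F : Finset (ℤ × ℤ), F.card = d → 2 * ⌈2 * √(d : ℝ)⌉ ≤ (theta2 F : ℤ) := by
    rintro F rfl
    exact two_mul_ceil_two_sqrt_le_theta2 F
  constructor
  · intro hmin
    obtain ⟨F, hF, hFle⟩ := exists_card_eq_theta2_le d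
    have := hmin F hF
    have := hlower E hE
    omega
  · intro heq F hF
    have := hlower F hF
    omega
end

section
/- For every natural number d ≥ 1 there exist s, s' ∈ N and e ∈ N ∪ {0} with s' ∈ {s, s+1}, s·s' + e = d, and e < s', such that the 'daisy' configuration D_d = R(s,s') ∪ L_e is a minimizer of the edge perimeter among d-element subsets of Z^2, where R(s,s') = Z^2 ∩ ([1,s]×[1,s']) and L_e is a line of e points attached along one side of the rectangle. -/
open Finset Filter

/-!
Writing `θ(E)` as a sum over the four unit directions, and noting that a set has as many last
points in direction `-δ` as in direction `δ`, gives `θ(E) = 2 (#right ends + #top ends)`.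
Every row met by `F` has a rightmost point and every column a topmost one, so
`θ(F) ≥ 2 (r + c)` where `r` columns and `c` rows meet `F`, while `d ≤ r c`; by AM–GM this forces
`r + c ≥ s + s' + [e ≠ 0]`. The rows and columns of the daisy are intervals, so it has exactly one
end per row and per column, and `θ(D_d) ≤ 2 (s + s' + [e ≠ 0])`.
-/

section AddCommGroup

variable {G : Type*} [AddCommGroup G]

lemma ncard_setOf_sub_mem_eq_sum (E D : Finset G) (P : G → Prop) [DecidablePred P] :
    {p : G × G | p.2 - p.1 ∈ D ∧ p.1 ∈ E ∧ P p.2}.ncard = ∑ δ ∈ D, #{x ∈ E | P (x + δ)} := by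
  have hset : {p : G × G | p.2 - p.1 ∈ D ∧ p.1 ∈ E ∧ P p.2} =
      (fun q : G × G => (q.1, q.1 + q.2)) '' ↑{q ∈ E ×ˢ D | P (q.1 + q.2)} := by
    ext ⟨x, y⟩
    simp only [Set.mem_ofPred_eq, coe_filter, mem_product, Set.mem_image, Prod.exists,
      Prod.mk.injEq]
    constructor
    · rintro ⟨hD, hE, hP⟩
      exact ⟨x, y - x, ⟨⟨hE, hD⟩, by rwa [add_sub_cancel]⟩, rfl, add_sub_cancel x y⟩
    · rintro ⟨a, δ, ⟨⟨hE, hD⟩, hP⟩, rfl, rfl⟩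
      exact ⟨by rwa [add_sub_cancel_left], hE, hP⟩
  have hinj : Function.Injective fun q : G × G => (q.1, q.1 + q.2) := by
    rintro ⟨a, δ⟩ ⟨b, ε⟩ h
    simp only [Prod.mk.injEq] at h
    obtain ⟨rfl, h⟩ := h
    simpa using h
  rw [hset, Set.ncard_image_of_injective _ hinj, Set.ncard_coe_finset, card_filter,
    sum_product_right]
  simp only [card_filter]

lemma card_filter_add_neg_notMem_s5 [DecidableEq G] (E : Finset G) (δ : G) :
    #{x ∈ E | x + -δ ∉ E} = #{x ∈ E | x + δ ∉ E} := by
  have hmem : #{x ∈ E | x + -δ ∈ E} = #{x ∈ E | x + δ ∈ E} :=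
    card_nbij' (· + -δ) (· + δ) (fun x hx => by simp_all) (fun x hx => by simp_all)
      (fun x _ => by simp) (fun x _ => by simp)
  have h₁ := card_filter_add_card_filter_not (s := E) (fun x => x + -δ ∈ E)
  have h₂ := card_filter_add_card_filter_not (s := E) (fun x => x + δ ∈ E)
  omega

end AddCommGroup

lemma card_image_le_card_filter_add_notMem {G ι α : Type*} [Add G] [DecidableEq G]
    [DecidableEq ι] [LinearOrder α] (F : Finset G) (δ : G) (π : G → ι) (ℓ : G → α)
    (hπ : ∀ x, π (x + δ) = π x) (hℓ : ∀ x, ℓ x < ℓ (x + δ)) :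
    #(F.image π) ≤ #{x ∈ F | x + δ ∉ F} := by
  refine card_le_card_of_surjOn π fun i hi => ?_
  obtain ⟨x, hx, rfl⟩ := mem_image.1 hi
  obtain ⟨m, hm, hmax⟩ := exists_max_image {y ∈ F | π y = π x} ℓ ⟨x, by simp [hx]⟩
  rw [mem_filter] at hm
  have hlast : m + δ ∉ F := fun h =>
    (hℓ m).not_ge (hmax _ (mem_filter.2 ⟨h, (hπ m).trans hm.2⟩))
  exact ⟨m, mem_filter.2 ⟨hm.1, hlast⟩, hm.2⟩

lemma card_filter_add_notMem_le_of_injOn {G : Type*} [Add G] [DecidableEq G] {D : Finset G}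
    {δ : G} (π : G → ℤ) (n : ℕ)
    (h : ∀ x ∈ D, ∀ y ∈ D, x + δ ∉ D → y + δ ∉ D → 1 ≤ π x ∧ π x ≤ n ∧ (π x = π y → x = y)) :
    #{x ∈ D | x + δ ∉ D} ≤ n := by
  refine (card_le_card_of_injOn π (t := Icc 1 (n : ℤ)) (fun x hx => ?_) fun x hx y hy => ?_).trans
    (by simp)
  · rw [coe_filter] at hx
    obtain ⟨h₁, h₂, -⟩ := h x hx.1 x hx.1 hx.2 hx.2
    simpa using ⟨h₁, h₂⟩
  · rw [coe_filter] at hx hy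
    exact (h x hx.1 y hy.1 hx.2 hy.2).2.2

def unitVectors : Finset (ℤ × ℤ) := {(1, 0), -(1, 0), (0, 1), -(0, 1)}

lemma sq_add_sq_eq_one_iff_mem_unitVectors (a b : ℤ) :
    a ^ 2 + b ^ 2 = 1 ↔ (a, b) ∈ unitVectors := by
  simp only [unitVectors, mem_insert, mem_singleton, Prod.neg_mk, Prod.mk.injEq, neg_zero]
  constructor
  · intro h
    have ha₁ : -1 ≤ a := by nlinarith [sq_nonneg b, sq_nonneg (a + 1)]
    have ha₂ : a ≤ 1 := by nlinarith [sq_nonneg b, sq_nonneg (a - 1)]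
    have hb₁ : -1 ≤ b := by nlinarith [sq_nonneg a, sq_nonneg (b + 1)]
    have hb₂ : b ≤ 1 := by nlinarith [sq_nonneg a, sq_nonneg (b - 1)]
    interval_cases a <;> interval_cases b <;> simp_all
  · rintro (⟨rfl, rfl⟩ | ⟨rfl, rfl⟩ | ⟨rfl, rfl⟩ | ⟨rfl, rfl⟩) <;> norm_num

lemma adj2_iff_sub_mem_unitVectors (x y : ℤ × ℤ) : adj2 x y ↔ y - x ∈ unitVectors := by
  rw [adj2, ← sq_add_sq_eq_one_iff_mem_unitVectors, Prod.fst_sub, Prod.snd_sub, ← neg_sub x.1,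
    ← neg_sub x.2, neg_sq, neg_sq]

lemma theta2_eq (E : Finset (ℤ × ℤ)) :
    theta2 E = 2 * (#{x ∈ E | x + (1, 0) ∉ E} + #{x ∈ E | x + (0, 1) ∉ E}) := by
  calc theta2 E = ∑ δ ∈ unitVectors, #{x ∈ E | x + δ ∉ E} := by
        simp_rw [theta2, adj2_iff_sub_mem_unitVectors]
        exact ncard_setOf_sub_mem_eq_sum E unitVectors (· ∉ E)
    _ = _ := by
        rw [unitVectors, sum_insert (by decide), sum_insert (by decide), sum_pair (by decide),
          card_filter_add_neg_notMem_s5, card_filter_add_neg_notMem_s5]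
        ring

lemma two_mul_card_image_fst_add_card_image_snd_le_theta2 (F : Finset (ℤ × ℤ)) :
    2 * (#(F.image Prod.fst) + #(F.image Prod.snd)) ≤ theta2 F := by
  have hrows := card_image_le_card_filter_add_notMem F (1, 0) Prod.snd Prod.fst
    (fun x => by simp) (fun x => by simp)
  have hcols := card_image_le_card_filter_add_notMem F (0, 1) Prod.fst Prod.snd
    (fun x => by simp) (fun x => by simp)
  rw [theta2_eq]
  omega

lemma add_add_ite_le_add_of_mul_add_le_mul {s s' e r c : ℕ} (hs : 1 ≤ s)
    (hss' : s' = s ∨ s' = s + 1) (he : e < s') (h : s * s' + e ≤ r * c) :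
    s + s' + (if e = 0 then 0 else 1) ≤ r + c := by
  by_contra! hlt
  have hamgm : 4 * (r * c) ≤ (r + c) ^ 2 := by nlinarith [sq_nonneg ((r : ℤ) - c)]
  rcases Nat.eq_zero_or_pos e with rfl | he0
  · rcases hss' with rfl | rfl <;> simp only [if_true] at hlt <;> nlinarith
  · rw [if_neg he0.ne'] at hlt
    rcases hss' with rfl | rfl <;> nlinarith

noncomputable def daisy (s s' e : ℕ) : Finset (ℤ × ℤ) :=
  (Icc (1 : ℤ) (s : ℤ) ×ˢ Icc (1 : ℤ) (s' : ℤ)) ∪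
    (if s' = s then Icc (1 : ℤ) (e : ℤ) ×ˢ {(s' : ℤ) + 1}
     else {(s : ℤ) + 1} ×ˢ Icc (1 : ℤ) (e : ℤ))

lemma mem_daisy_self {s e : ℕ} {x : ℤ × ℤ} :
    x ∈ daisy s s e ↔ (1 ≤ x.1 ∧ x.1 ≤ s ∧ 1 ≤ x.2 ∧ x.2 ≤ s) ∨
      (1 ≤ x.1 ∧ x.1 ≤ e ∧ x.2 = s + 1) := by
  simp only [daisy, if_pos, mem_union, mem_product, mem_Icc, mem_singleton, and_assoc]

lemma mem_daisy_succ {s e : ℕ} {x : ℤ × ℤ} :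
    x ∈ daisy s (s + 1) e ↔ (1 ≤ x.1 ∧ x.1 ≤ s ∧ 1 ≤ x.2 ∧ x.2 ≤ s + 1) ∨
      (x.1 = s + 1 ∧ 1 ≤ x.2 ∧ x.2 ≤ e) := by
  simp only [daisy, if_neg (Nat.succ_ne_self s), mem_union, mem_product, mem_Icc, mem_singleton,
    Nat.cast_add, Nat.cast_one, and_assoc]

lemma card_daisy (s s' e : ℕ) : #(daisy s s' e) = s * s' + e := by
  rw [daisy, card_union_of_disjoint]
  · split_ifs <;> simp
  · rw [disjoint_left]
    intro x hx hx'
    split_ifs at hx' <;> simp only [mem_product, mem_Icc, mem_singleton] at hx hx' <;> omega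

lemma theta2_daisy_le {s s' e : ℕ} (hss' : s' = s ∨ s' = s + 1) (he : e < s') :
    theta2 (daisy s s' e) ≤ 2 * (s + s' + if e = 0 then 0 else 1) := by
  obtain ⟨k, hk, hek⟩ : ∃ k, (if e = 0 then 0 else 1) = k ∧ (e = 0 ∧ k = 0 ∨ 0 < e ∧ k = 1) :=
    ⟨_, rfl, by split_ifs <;> omega⟩
  rw [hk, theta2_eq]
  rcases hss' with h | h <;> subst s'
  · have hrows := card_filter_add_notMem_le_of_injOn (D := daisy s s e) (δ := (1, 0)) Prod.snd
      (s + k) ?_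
    have hcols := card_filter_add_notMem_le_of_injOn (D := daisy s s e) (δ := (0, 1)) Prod.fst
      s ?_
    · omega
    all_goals
      intro x hx y hy hx' hy'
      simp only [mem_daisy_self, Prod.fst_add, Prod.snd_add, add_zero] at hx hx' hy hy'
      exact ⟨by omega, by omega, fun h => Prod.ext (by omega) (by omega)⟩
  · have hrows := card_filter_add_notMem_le_of_injOn (D := daisy s (s + 1) e) (δ := (1, 0))
      Prod.snd (s + 1) ?_
    have hcols := card_filter_add_notMem_le_of_injOn (D := daisy s (s + 1) e) (δ := (0, 1))
      Prod.fst (s + k) ?_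
    · omega
    all_goals
      intro x hx y hy hx' hy'
      simp only [mem_daisy_succ, Prod.fst_add, Prod.snd_add, add_zero] at hx hx' hy hy'
      exact ⟨by omega, by omega, fun h => Prod.ext (by omega) (by omega)⟩

lemma theta2_daisy_le_theta2 {s s' e : ℕ} (hs : 1 ≤ s) (hss' : s' = s ∨ s' = s + 1) (he : e < s')
    {F : Finset (ℤ × ℤ)} (hF : #F = s * s' + e) : theta2 (daisy s s' e) ≤ theta2 F := by
  have hbox : #F ≤ #(F.image Prod.fst) * #(F.image Prod.snd) :=
    (card_le_card subset_product).trans (card_product _ _).le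
  calc theta2 (daisy s s' e) ≤ 2 * (s + s' + if e = 0 then 0 else 1) := theta2_daisy_le hss' he
    _ ≤ 2 * (#(F.image Prod.fst) + #(F.image Prod.snd)) :=
        Nat.mul_le_mul_left 2 (add_add_ite_le_add_of_mul_add_le_mul hs hss' he (hF ▸ hbox))
    _ ≤ theta2 F := two_mul_card_image_fst_add_card_image_snd_le_theta2 F

lemma exists_daisy_params (d : ℕ) (hd : 1 ≤ d) :
    ∃ s s' e : ℕ, 1 ≤ s ∧ (s' = s ∨ s' = s + 1) ∧ s * s' + e = d ∧ e < s' := by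
  obtain ⟨t, ht⟩ := Nat.exists_eq_add_of_le (Nat.sqrt_le d)
  have hm : 1 ≤ d.sqrt := Nat.sqrt_pos.2 hd
  have htm : t < 2 * d.sqrt + 1 := by nlinarith [Nat.lt_succ_sqrt d]
  rcases lt_or_ge t d.sqrt with hlt | hge
  · exact ⟨d.sqrt, d.sqrt, t, hm, Or.inl rfl, ht.symm, hlt⟩
  · exact ⟨d.sqrt, d.sqrt + 1, t - d.sqrt, hm, Or.inr rfl, by rw [Nat.mul_succ]; omega, by omega⟩

/-- for every `d ≥ 1` there is a daisy `D_d = R(s,s') ∪ L_e`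
which minimizes the edge perimeter among `d`-element subsets of `ℤ²`. -/
theorem exists_daisy_minimizer (d : ℕ) (hd : 1 ≤ d) :
    ∃ s s' e : ℕ, 1 ≤ s ∧ (s' = s ∨ s' = s + 1) ∧ s * s' + e = d ∧ e < s' ∧
      (let D : Finset (ℤ × ℤ) :=
        (Icc (1 : ℤ) (s : ℤ) ×ˢ Icc (1 : ℤ) (s' : ℤ)) ∪
          (if s' = s then Icc (1 : ℤ) (e : ℤ) ×ˢ {(s' : ℤ) + 1}
           else {(s : ℤ) + 1} ×ˢ Icc (1 : ℤ) (e : ℤ))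
      D.card = d ∧ ∀ F : Finset (ℤ × ℤ), F.card = d → theta2 D ≤ theta2 F) := by
  obtain ⟨s, s', e, hs, hss', rfl, he⟩ := exists_daisy_params d hd
  exact ⟨s, s', e, hs, hss', rfl, he, card_daisy s s' e,
    fun F hF => theta2_daisy_le_theta2 hs hss' he hF⟩
end
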